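/- arXiv:2603.13169 — 3 statements merged into one kernel-verified Lean document; each statement's English description precedes it below -/
import Mathlib

section
/- Let θ be a real number. Define the 4×4 complex matrix U = I ⊗ |0⟩⟨0| + R_y(−2θ) ⊗ |1⟩⟨1| (Kronecker product, first tensor factor is the resource qubit). Then for every vector ψ ∈ ℂ², U (|+i⟩ ⊗ ψ) = |+i⟩ ⊗ (e^{iθ/2} R_z(θ) ψ). -/
open Matrix Kronecker

/-- |0⟩⟨0| -/
noncomputable def proj0 : Matrix (Fin 2) (Fin 2) ℂ := !![1, 0; 0, 0]

/-- |1⟩⟨1| -/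
noncomputable def proj1 : Matrix (Fin 2) (Fin 2) ℂ := !![0, 0; 0, 1]

/-- |+i⟩ = (|0⟩ + i|1⟩)/√2 -/
noncomputable def ketPlusI : Fin 2 → ℂ :=
  ![1 / Real.sqrt 2, Complex.I / Real.sqrt 2]

/-- Rotation around the y axis. -/
noncomputable def Ry (θ : ℝ) : Matrix (Fin 2) (Fin 2) ℂ :=
  !![Real.cos (θ / 2), -Real.sin (θ / 2);
     Real.sin (θ / 2),  Real.cos (θ / 2)]

/-- Rotation around the z axis. -/
noncomputable def Rz (θ : ℝ) : Matrix (Fin 2) (Fin 2) ℂ :=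
  !![Complex.exp (-(θ / 2) * Complex.I), 0;
     0, Complex.exp ((θ / 2) * Complex.I)]

/-- Kronecker product of vectors. -/
def vecKron {m n : Type*} (v : m → ℂ) (w : n → ℂ) : m × n → ℂ :=
  fun p => v p.1 * w p.2

theorem rz_from_real_orthogonal_and_plusI (θ : ℝ) (ψ : Fin 2 → ℂ) :
    ((1 : Matrix (Fin 2) (Fin 2) ℂ) ⊗ₖ proj0 + Ry (-2 * θ) ⊗ₖ proj1) *ᵥ
        vecKron ketPlusI ψ
      = vecKron ketPlusI ((Complex.exp ((θ / 2 : ℝ) * Complex.I) • Rz θ) *ᵥ ψ) := by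
  have h1 : Complex.exp (-(Complex.I * (θ : ℂ) / 2)) * Complex.exp (Complex.I * (θ : ℂ) / 2) = 1 := by
    rw [← Complex.exp_add]; ring_nf; exact Complex.exp_zero
  have h2 : Complex.exp (Complex.I * (θ : ℂ) / 2) * Complex.exp (Complex.I * (θ : ℂ) / 2)
      = Complex.cos θ + Complex.sin θ * Complex.I := by
    rw [← Complex.exp_add, show Complex.I * (θ : ℂ) / 2 + Complex.I * (θ : ℂ) / 2
      = (θ : ℂ) * Complex.I by ring, Complex.exp_mul_I]
  have harg1 : ((-2 * θ : ℝ) / 2 : ℝ) = -θ := by ring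
  have harg2 : (((θ : ℝ) / 2 : ℝ) : ℂ) * Complex.I = Complex.I * (θ : ℂ) / 2 := by
    push_cast; ring
  have harg3 : (-((θ : ℂ) / 2)) * Complex.I = -(Complex.I * (θ : ℂ) / 2) := by ring
  have harg4 : ((θ : ℂ) / 2) * Complex.I = Complex.I * (θ : ℂ) / 2 := by ring
  funext p
  obtain ⟨i, j⟩ := p
  fin_cases i <;> fin_cases j <;>
    simp only [Matrix.mulVec, dotProduct, vecKron, ketPlusI, proj0, proj1, Ry, Rz,
      Matrix.add_apply, Matrix.kroneckerMap_apply, Matrix.smul_apply, Pi.smul_apply,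
      Matrix.one_apply, harg1, harg2, harg3, harg4, Complex.ofReal_cos, Complex.ofReal_sin,
      Complex.ofReal_neg, Complex.cos_neg, Complex.sin_neg,
      Fintype.sum_prod_type, Fin.sum_univ_two, Matrix.cons_val', Matrix.cons_val_zero,
      Matrix.cons_val_one, Matrix.head_cons, Matrix.empty_val', Matrix.cons_val_fin_one,
      Matrix.head_fin_const, smul_eq_mul, Fin.isValue, Fin.zero_eta, Fin.mk_one, Matrix.of_apply, if_true, neg_neg,
      one_mul, mul_one, zero_mul, mul_zero, add_zero, zero_add] <;>
    norm_num
  · linear_combination (-(ψ 0)) * h1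
  · linear_combination (-(ψ 1) * ((Real.sqrt 2 : ℝ) : ℂ)⁻¹) * h2
  · linear_combination (-(ψ 0)) * h1
  · linear_combination (-(ψ 1) * Complex.I * ((Real.sqrt 2 : ℝ) : ℂ)⁻¹) * h2
      + (-(Complex.sin θ) * ((Real.sqrt 2 : ℝ) : ℂ)⁻¹ * ψ 1) * Complex.I_sq
end

section
/- Define the 4×4 complex matrix U = I ⊗ |0⟩⟨0| + iY ⊗ |1⟩⟨1|. Then for every vector ψ ∈ ℂ², U (|+i⟩ ⊗ ψ) = |+i⟩ ⊗ (S ψ). In particular the S gate is generated by a real orthogonal matrix acting on the maximally imaginary state |+i⟩ without any non-imaginary ancillary qubit. -/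
open Matrix Kronecker

/-- Pauli Y. -/
noncomputable def PauliY : Matrix (Fin 2) (Fin 2) ℂ := !![0, -Complex.I; Complex.I, 0]

/-- S gate. -/
noncomputable def Sgate : Matrix (Fin 2) (Fin 2) ℂ := !![1, 0; 0, Complex.I]

theorem s_gate_from_plusI_no_ancilla (ψ : Fin 2 → ℂ) :
    ((1 : Matrix (Fin 2) (Fin 2) ℂ) ⊗ₖ proj0 + (Complex.I • PauliY) ⊗ₖ proj1) *ᵥ
        vecKron ketPlusI ψ
      = vecKron ketPlusI (Sgate *ᵥ ψ) := by
  ext ⟨i, j⟩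
  simp only [Matrix.mulVec, dotProduct, Fintype.sum_prod_type, Fin.sum_univ_two,
    Matrix.add_apply, Matrix.kroneckerMap_apply, Matrix.smul_apply, vecKron, ketPlusI,
    proj0, proj1, PauliY, Sgate, Matrix.one_apply, smul_eq_mul]
  fin_cases i <;> fin_cases j <;> simp <;> ring_nf <;> simp [Complex.I_sq]
end

section
/- Define the 8×8 complex matrix U = I ⊗ (I₄ − |11⟩⟨11|) + iY ⊗ |11⟩⟨11|. Then for every vector ψ ∈ ℂ⁴, U (|+i⟩ ⊗ ψ) = |+i⟩ ⊗ (Λ(S) ψ). In particular the controlled-S gate Λ(S) is generated by a real orthogonal matrix acting on the maximally imaginary state |+i⟩ without any non-imaginary ancillary qubit. -/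
open Matrix Kronecker

/-- |11⟩⟨11| = |1⟩⟨1| ⊗ |1⟩⟨1| -/
noncomputable def proj11 : Matrix (Fin 2 × Fin 2) (Fin 2 × Fin 2) ℂ := proj1 ⊗ₖ proj1

/-- Controlled-S gate Λ(S). -/
noncomputable def LambdaS : Matrix (Fin 2 × Fin 2) (Fin 2 × Fin 2) ℂ :=
  proj0 ⊗ₖ (1 : Matrix (Fin 2) (Fin 2) ℂ) + proj1 ⊗ₖ Sgate

theorem controlled_s_from_plusI_no_ancilla (ψ : Fin 2 × Fin 2 → ℂ) :
    ((1 : Matrix (Fin 2) (Fin 2) ℂ) ⊗ₖ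
        ((1 : Matrix (Fin 2 × Fin 2) (Fin 2 × Fin 2) ℂ) - proj11) +
      (Complex.I • PauliY) ⊗ₖ proj11) *ᵥ vecKron ketPlusI ψ
      = vecKron ketPlusI (LambdaS *ᵥ ψ) := by
  funext ⟨a, b, c⟩
  simp only [mulVec, dotProduct, Fintype.sum_prod_type, Fin.sum_univ_two,
    Matrix.add_apply, Matrix.sub_apply, kroneckerMap_apply, one_apply, proj11, proj0, proj1,
    PauliY, Sgate, LambdaS, ketPlusI, vecKron, Matrix.smul_apply, smul_eq_mul]
  fin_cases a <;> fin_cases b <;> fin_cases c <;>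
    simp [Matrix.one_apply, Prod.ext_iff, Complex.ext_iff] <;>
    constructor <;> field_simp <;> ring_nf <;> simp
end
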